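/- arXiv:0711.2137 — 8 statements merged into one kernel-verified Lean document; each statement's English description precedes it below -/
import Mathlib

section
/- Let E be a field, R = Fin f → E, φ the cyclic shift automorphism, and let α, β ∈ R have all coordinates nonzero. The equation α·γ = β·φ(γ) has a nonzero solution γ ∈ R if and only if ∏_i α_i = ∏_i β_i. Moreover, in that case every solution is of the form γ = c·(1, α₀/β₀, α₀α₁/(β₀β₁), ..., α₀⋯α_{f-2}/(β₀⋯β_{f-2})) for some c ∈ E. -/
/-- The cyclic shift automorphism of `Fin f → E`: `(shift x) i = x (i + 1)`. -/
def shift {f : ℕ} [NeZero f] {E : Type*} (x : Fin f → E) : Fin f → E :=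
  fun i => x (i + 1)

section helpers
variable {f : ℕ} [NeZero f]

omit [NeZero f] in
lemma filt_succ {k : ℕ} (hk : k + 1 < f) :
    Finset.univ.filter (fun j : Fin f => j < ⟨k+1, hk⟩) =
      insert ⟨k, Nat.lt_of_succ_lt hk⟩
        (Finset.univ.filter (fun j : Fin f => j < ⟨k, Nat.lt_of_succ_lt hk⟩)) := by
  ext j
  simp only [Finset.mem_filter, Finset.mem_insert, Finset.mem_univ, true_and, Fin.lt_def,
    Fin.ext_iff]
  omega

lemma univ_split : (Finset.univ : Finset (Fin f)) =
    insert ⟨f-1, Nat.sub_lt (Nat.pos_of_ne_zero (NeZero.ne f)) one_pos⟩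
      (Finset.univ.filter (fun j : Fin f => j < ⟨f-1, Nat.sub_lt (Nat.pos_of_ne_zero (NeZero.ne f)) one_pos⟩)) := by
  ext j
  simp only [Finset.mem_insert, Finset.mem_filter, Finset.mem_univ, true_and, Fin.lt_def,
    Fin.ext_iff, true_iff]
  have h2 : (j:ℕ) < f := j.isLt
  omega

lemma mk_succ {k : ℕ} (hk : k + 1 < f) :
    (⟨k, Nat.lt_of_succ_lt hk⟩ : Fin f) + 1 = ⟨k+1, hk⟩ := by
  have hf : 1 < f := lt_of_le_of_lt (Nat.le_add_left 1 k) hk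
  apply Fin.ext
  simp [Fin.add_def, Fin.val_one', Nat.mod_eq_of_lt hf, Nat.mod_eq_of_lt hk]

lemma last_succ :
    (⟨f-1, Nat.sub_lt (Nat.pos_of_ne_zero (NeZero.ne f)) one_pos⟩ : Fin f) + 1 = 0 := by
  have hf : 0 < f := Nat.pos_of_ne_zero (NeZero.ne f)
  apply Fin.ext
  have h1 : ((1 : Fin f) : ℕ) = 1 % f := rfl
  simp only [Fin.add_def, h1, Fin.val_zero]
  rcases Nat.lt_or_ge 1 f with h | h
  · rw [Nat.mod_eq_of_lt h]
    have h2 : f - 1 + 1 = f := by omega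
    rw [h2, Nat.mod_self]
  · have h2 : f = 1 := by omega
    subst h2
    rfl

lemma filt_zero_empty : Finset.univ.filter (fun j : Fin f => j < 0) = ∅ := by
  ext j; simp [Fin.lt_def]

lemma mk_zero (h : 0 < f) : (⟨0, h⟩ : Fin f) = 0 := by
  apply Fin.ext; simp

end helpers

theorem stmt2 (E : Type*) [Field E] (f : ℕ) [NeZero f] (α β : Fin f → E)
    (hα : ∀ i, α i ≠ 0) (hβ : ∀ i, β i ≠ 0) :
    ((∃ γ : Fin f → E, γ ≠ 0 ∧ α * γ = β * shift γ) ↔ ∏ i, α i = ∏ i, β i) ∧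
    (∏ i, α i = ∏ i, β i →
      ∀ γ : Fin f → E, α * γ = β * shift γ →
        ∃ c : E, γ = fun i => c * ∏ j ∈ Finset.univ.filter (fun j => j < i), (α j / β j)) := by
  have hf : 0 < f := Nat.pos_of_ne_zero (NeZero.ne f)
  set P : Fin f → E := fun i => ∏ j ∈ Finset.univ.filter (fun j => j < i), (α j / β j) with hP
  set L : Fin f := ⟨f-1, Nat.sub_lt hf one_pos⟩ with hL
  -- key formula
  have key : ∀ γ : Fin f → E, α * γ = β * shift γ → ∀ i, γ i = γ 0 * P i := by
    intro γ heq
    have heq' : ∀ i, α i * γ i = β i * γ (i + 1) := fun i => congrFun heq i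
    have main : ∀ k (hk : k < f), γ ⟨k, hk⟩ = γ 0 * P ⟨k, hk⟩ := by
      intro k
      induction k with
      | zero =>
        intro hk
        simp only [hP, mk_zero hf, filt_zero_empty, Finset.prod_empty, mul_one]
      | succ k ih =>
        intro hk
        have hk' := Nat.lt_of_succ_lt hk
        have h1 := heq' ⟨k, hk'⟩
        rw [mk_succ hk] at h1
        have h2 : γ ⟨k+1, hk⟩ = (α ⟨k, hk'⟩ / β ⟨k, hk'⟩) * γ ⟨k, hk'⟩ := by
          rw [div_mul_eq_mul_div, eq_div_iff (hβ _)]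
          linear_combination -h1
        rw [h2, ih hk']
        simp only [hP, filt_succ hk]
        rw [Finset.prod_insert (by simp)]
        ring
    intro i
    cases i with
    | mk k hk => exact main k hk
  -- product identity consequence
  have prodPL : (α L / β L) * P L = ∏ j, (α j / β j) := by
    rw [hP]
    conv_rhs => rw [univ_split]
    rw [Finset.prod_insert (by simp)]
  have prod_div : ∏ j, (α j / β j) = (∏ j, α j) / (∏ j, β j) := by
    rw [Finset.prod_div_distrib]
  have hβprod : (∏ j, β j) ≠ 0 := Finset.prod_ne_zero_iff.mpr fun j _ => hβ j
  constructor
  · constructor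
    · rintro ⟨γ, hγ0, heq⟩
      have hform := key γ heq
      have hγz : γ 0 ≠ 0 := by
        intro h0
        apply hγ0
        funext i
        simp [hform i, h0]
      have h1 := congrFun heq L
      simp only [Pi.mul_apply, shift] at h1
      have hL1 : L + 1 = 0 := last_succ
      rw [hL1] at h1
      rw [hform L] at h1
      -- α L * (γ 0 * P L) = β L * γ 0
      have h2 : (α L / β L) * P L = 1 := by
        rw [div_mul_eq_mul_div, div_eq_one_iff_eq (hβ _)]
        exact mul_right_cancel₀ hγz (by linear_combination h1)
      rw [prodPL, prod_div] at h2
      field_simp at h2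
      exact h2
    · intro hprod
      refine ⟨P, ?_, ?_⟩
      · intro h0
        have : P 0 = 0 := by rw [h0]; rfl
        rw [hP] at this
        simp [filt_zero_empty] at this
      · funext i
        simp only [Pi.mul_apply, shift]
        cases i with
        | mk k hk =>
          rcases lt_or_ge (k+1) f with hk1 | hk1
          · rw [mk_succ hk1]
            simp only [hP, filt_succ hk1]
            rw [Finset.prod_insert (by simp), ← mul_assoc,
              mul_comm (β _) (α _ / β _), div_mul_cancel₀ _ (hβ _)]
          · have hkL : (⟨k, hk⟩ : Fin f) = L := by
              apply Fin.ext; simp only [hL]; omega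
            rw [hkL, last_succ]
            have hP0 : P 0 = 1 := by simp [hP, filt_zero_empty]
            rw [hP0, mul_one]
            have h2 : (α L / β L) * P L = 1 := by
              rw [prodPL, prod_div, hprod, div_self hβprod]
            rw [div_mul_eq_mul_div, div_eq_one_iff_eq (hβ _)] at h2
            exact h2
  · intro _ γ heq
    exact ⟨γ 0, funext fun i => key γ heq i⟩
end

section
/- Let E be a field, R = Fin f → E, φ the cyclic shift automorphism, and α ∈ E nonzero. If x ∈ R has all coordinates nonzero and ∏_{i} x_i = α^f, then there exists t ∈ R with all coordinates nonzero such that x·t = (α·1)·φ(t), i.e. x equals the constant vector α·1 up to the φ-coboundary φ(t)/t. -/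
open Fin.NatCast

theorem stmt3 (E : Type*) [Field E] (f : ℕ) [NeZero f] (α : E) (hα : α ≠ 0)
    (x : Fin f → E) (hx : ∀ i, x i ≠ 0) (hprod : ∏ i, x i = α ^ f) :
    ∃ t : Fin f → E, (∀ i, t i ≠ 0) ∧ x * t = (fun _ => α) * shift t := by
  have hf : f = (f - 1) + 1 := by have := NeZero.pos f; omega
  refine ⟨fun i => (∏ j ∈ Finset.range i.val, x (j : Fin f)) / α ^ (i.val : ℕ), ?_, ?_⟩
  · intro i
    apply div_ne_zero
    · exact Finset.prod_ne_zero_iff.mpr fun j _ => hx _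
    · exact pow_ne_zero _ hα
  · funext i
    simp only [Pi.mul_apply, shift]
    have hadd : ((i + 1 : Fin f)).val = (i.val + 1) % f := by
      simp [Fin.add_def]
    rcases lt_or_ge (i.val + 1) f with h | h
    · have hval : ((i + 1 : Fin f)).val = i.val + 1 := by
        rw [hadd, Nat.mod_eq_of_lt h]
      rw [hval, Finset.prod_range_succ, pow_succ]
      rw [Fin.cast_val_eq_self i]
      field_simp
    · have hlast : i.val = f - 1 := by omega
      have hzero : ((i + 1 : Fin f)).val = 0 := by
        rw [hadd, show i.val + 1 = f by omega, Nat.mod_self]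
      rw [hzero]
      simp only [Finset.range_zero, Finset.prod_empty, pow_zero, div_one, mul_one]
      have huniv : ∏ j, x j = ∏ j ∈ Finset.range f, x (j : Fin f) := by
        rw [← Fin.prod_univ_eq_prod_range (fun j => x (j : Fin f)) f]
        exact Finset.prod_congr rfl fun j _ => by rw [Fin.cast_val_eq_self]
      have hsplit : ∏ j ∈ Finset.range f, x (j : Fin f)
          = (∏ j ∈ Finset.range (f - 1), x (j : Fin f)) * x ((f - 1 : ℕ) : Fin f) := by
        rw [show Finset.range f = Finset.range (f - 1 + 1) from by rw [← hf]]
        rw [Finset.prod_range_succ]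
      have hi : ((f - 1 : ℕ) : Fin f) = i := by
        rw [← hlast]; exact Fin.cast_val_eq_self i
      rw [hi] at hsplit
      rw [huniv, hsplit] at hprod
      rw [hlast, mul_div_assoc', div_eq_iff (pow_ne_zero _ hα), mul_comm (x i), hprod]
      conv_lhs => rw [hf]
      rw [pow_succ]
      ring
end

section
/- Let E be a field of characteristic zero, p ∈ E nonzero, R = Fin f → E, φ the cyclic shift automorphism, and α, δ ∈ Eˣ. Suppose N ∈ M₂(R) satisfies N·D = p·D·φ(N) where D = diag(α·1, δ·1) and φ acts entrywise, and suppose every component matrix N_i ∈ M₂(E) is nilpotent. If α^f ≠ p^f δ^f and δ^f ≠ p^f α^f, then N = 0. -/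
open Fin.NatCast in
lemma iter_shift {f : ℕ} [NeZero f] {E : Type*} [Field E] (u v : E) (x : Fin f → E)
    (h : ∀ i, u * x i = v * x (i + 1)) :
    ∀ (k : ℕ) (i : Fin f), u ^ k * x i = v ^ k * x (i + (k : Fin f)) := by
  intro k
  induction k with
  | zero => intro i; simp
  | succ k ih =>
    intro i
    have hc : ((k + 1 : ℕ) : Fin f) = (k : Fin f) + 1 := by push_cast; ring
    calc u ^ (k + 1) * x i = u * (u ^ k * x i) := by ring
      _ = u * (v ^ k * x (i + (k : Fin f))) := by rw [ih i]
      _ = v ^ k * (u * x (i + (k : Fin f))) := by ring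
      _ = v ^ k * (v * x (i + (k : Fin f) + 1)) := by rw [h]
      _ = v ^ (k + 1) * x (i + ((k + 1 : ℕ) : Fin f)) := by rw [hc, add_assoc]; ring

open Fin.NatCast in
lemma zero_of_cycle {f : ℕ} [NeZero f] {E : Type*} [Field E] (u v : E) (x : Fin f → E)
    (h : ∀ i, u * x i = v * x (i + 1)) (hne : u ^ f ≠ v ^ f) : ∀ i, x i = 0 := by
  intro i
  have := iter_shift u v x h f i
  rw [Fin.natCast_self, add_zero] at this
  have h2 : (u ^ f - v ^ f) * x i = 0 := by ring_nf; linear_combination this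
  rcases mul_eq_zero.1 h2 with h3 | h3
  · exact absurd (sub_eq_zero.1 h3) hne
  · exact h3

theorem stmt9 (E : Type*) [Field E] [CharZero E] (f : ℕ) [NeZero f]
    (p α δ : E) (hp : p ≠ 0) (hα : α ≠ 0) (hδ : δ ≠ 0)
    (N : Matrix (Fin 2) (Fin 2) (Fin f → E))
    (hnil : ∀ i : Fin f, IsNilpotent (Matrix.of fun a b : Fin 2 => N a b i))
    (hrel : N * Matrix.diagonal ![(fun _ => α), (fun _ => δ)] =
      ((fun _ => p) : Fin f → E) •
        (Matrix.diagonal ![(fun _ => α), (fun _ => δ)] * N.map shift))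
    (h1 : α ^ f ≠ p ^ f * δ ^ f) (h2 : δ ^ f ≠ p ^ f * α ^ f) :
    N = 0 := by
  -- entrywise equations
  have key : ∀ (a b : Fin 2) (i : Fin f),
      N a b i * (![α, δ] b) = p * (![α, δ] a) * N a b (i + 1) := by
    intro a b i
    have h := congrFun (congrFun (congrFun hrel a) b) i
    rw [Matrix.mul_diagonal, Matrix.smul_apply, Matrix.diagonal_mul] at h
    fin_cases a <;> fin_cases b <;>
      simpa [Matrix.map_apply, shift, mul_comm, mul_assoc, mul_left_comm] using h
  -- off-diagonal entries are zero
  have hb : ∀ i, N 0 1 i = 0 := by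
    refine zero_of_cycle δ (p * α) (N 0 1) (fun i => ?_) (by rw [mul_pow]; exact h2)
    have := key 0 1 i; simpa [mul_comm] using this
  have hc : ∀ i, N 1 0 i = 0 := by
    refine zero_of_cycle α (p * δ) (N 1 0) (fun i => ?_) (by rw [mul_pow]; exact h1)
    have := key 1 0 i; simpa [mul_comm] using this
  -- trace and det zero from nilpotency
  have hdiag : ∀ i, N 0 0 i = 0 ∧ N 1 1 i = 0 := by
    intro i
    obtain ⟨M, hM⟩ : ∃ M : Matrix (Fin 2) (Fin 2) E,
        (M = Matrix.of fun a b : Fin 2 => N a b i) := ⟨_, rfl⟩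
    have hMn : IsNilpotent M := hM ▸ hnil i
    have htr : M.trace = 0 := by
      have := Matrix.isNilpotent_trace_of_isNilpotent hMn
      exact this.eq_zero
    have hdet : M.det = 0 := by
      obtain ⟨k, hk⟩ := hMn
      have : M.det ^ k = 0 := by rw [← Matrix.det_pow, hk]; simp
      exact (pow_eq_zero_iff'.mp this).1
    rw [Matrix.trace_fin_two] at htr
    rw [Matrix.det_fin_two] at hdet
    have hM00 : M 0 0 = N 0 0 i := by rw [hM]; rfl
    have hM11 : M 1 1 = N 1 1 i := by rw [hM]; rfl
    have hM01 : M 0 1 = N 0 1 i := by rw [hM]; rfl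
    have hM10 : M 1 0 = N 1 0 i := by rw [hM]; rfl
    rw [hM00, hM11] at htr
    rw [hM00, hM11, hM01, hM10, hb i, hc i] at hdet
    have hsq : N 0 0 i * N 0 0 i = 0 := by
      have hd : N 1 1 i = -N 0 0 i := by linear_combination htr
      calc N 0 0 i * N 0 0 i = -(N 0 0 i * N 1 1 i) := by rw [hd]; ring
        _ = 0 := by rw [show N 0 0 i * N 1 1 i = 0 by linear_combination hdet]; ring
    have h00 : N 0 0 i = 0 := by
      rcases mul_eq_zero.1 hsq with h | h <;> exact h
    exact ⟨h00, by linear_combination htr - h00⟩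
  ext a b i
  fin_cases a <;> fin_cases b <;>
    simp [hb i, hc i, (hdiag i).1, (hdiag i).2]
end

section
/- Let E be a field of characteristic zero, p ∈ E nonzero, R = Fin f → E, φ the cyclic shift automorphism, α, δ ∈ Eˣ with α^f = p^f·δ^f, and let D = diag(α·1, δ·1). Then a lower triangular matrix N = [[0,0],[n,0]] with n ∈ R satisfies N·D = p·D·φ(N) if and only if n = c·(1, ζ, ζ², ..., ζ^{f-1}) for some c ∈ E, where ζ = α/(pδ). -/
theorem stmt10 (E : Type*) [Field E] [CharZero E] (f : ℕ) [NeZero f]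
    (p α δ : E) (hp : p ≠ 0) (hα : α ≠ 0) (hδ : δ ≠ 0)
    (hf : α ^ f = p ^ f * δ ^ f) (n : Fin f → E) :
    (Matrix.of ![![(0 : Fin f → E), 0], ![n, 0]] *
        Matrix.diagonal ![(fun _ => α), (fun _ => δ)] =
      ((fun _ => p) : Fin f → E) •
        (Matrix.diagonal ![(fun _ => α), (fun _ => δ)] *
          (Matrix.of ![![(0 : Fin f → E), 0], ![n, 0]]).map shift)) ↔
    ∃ c : E, n = fun i : Fin f => c * (α / (p * δ)) ^ (i : ℕ) := by
  obtain ⟨m, rfl⟩ : ∃ m, f = m + 1 :=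
    ⟨f - 1, (Nat.succ_pred_eq_of_pos (NeZero.pos f)).symm⟩
  set ζ : E := α / (p * δ) with hζ
  have hpδ : p * δ ≠ 0 := mul_ne_zero hp hδ
  have hαζ : α = p * δ * ζ := by rw [hζ]; field_simp
  have hzf : ζ ^ (m + 1) = 1 := by
    rw [hζ, div_pow, mul_pow, hf]
    field_simp
  have key : (Matrix.of ![![(0 : Fin (m+1) → E), 0], ![n, 0]] *
        Matrix.diagonal ![(fun _ => α), (fun _ => δ)] =
      ((fun _ => p) : Fin (m+1) → E) •
        (Matrix.diagonal ![(fun _ => α), (fun _ => δ)] *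
          (Matrix.of ![![(0 : Fin (m+1) → E), 0], ![n, 0]]).map shift)) ↔
      (∀ i : Fin (m+1), n i * α = p * (δ * n (i+1))) := by
    constructor
    · intro h i
      have := congrFun (congrFun (congrFun h 1) 0) i
      simpa [Matrix.mul_apply, Fin.sum_univ_two, Matrix.diagonal, shift,
        Matrix.smul_apply, Pi.smul_apply, smul_eq_mul] using this
    · intro h
      ext a b
      fin_cases a <;> fin_cases b <;>
        simp [Matrix.mul_apply, Fin.sum_univ_two, Matrix.diagonal, shift,
          Matrix.smul_apply, Pi.smul_apply, smul_eq_mul] <;> exact h _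
  rw [key]
  have hrec : ∀ i : Fin (m+1), (n i * α = p * (δ * n (i+1))) ↔ n (i+1) = ζ * n i := by
    intro i
    rw [hαζ]
    constructor
    · intro h
      apply mul_left_cancel₀ hpδ
      linear_combination -h
    · intro h; rw [h]; ring
  constructor
  · intro h
    refine ⟨n 0, ?_⟩
    funext i
    have claim : ∀ k (hk : k < m + 1), n ⟨k, hk⟩ = n 0 * ζ ^ k := by
      intro k
      induction k with
      | zero => intro hk; simp
      | succ k ih =>
        intro hk
        have hk' : k < m + 1 := Nat.lt_of_succ_lt hk
        have hne : (⟨k, hk'⟩ : Fin (m+1)) ≠ Fin.last m := by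
          simp [Fin.ext_iff, Fin.last]; omega
        have hadd : (⟨k, hk'⟩ : Fin (m+1)) + 1 = ⟨k + 1, hk⟩ := by
          apply Fin.ext
          rw [Fin.val_add_one, if_neg hne]
        have := (hrec ⟨k, hk'⟩).mp (h _)
        rw [hadd] at this
        rw [this, ih hk', pow_succ]
        ring
    have := claim i.val i.isLt
    simpa using this
  · rintro ⟨c, hn⟩ i
    rw [hrec]
    simp only [hn]
    by_cases hi : i = Fin.last m
    · subst hi
      have h0 : ((Fin.last m + 1 : Fin (m+1)) : ℕ) = 0 := by
        rw [Fin.val_add_one, if_pos rfl]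
      rw [h0, Fin.val_last, pow_zero, mul_one]
      have h1 : ζ * (c * ζ ^ m) = c * ζ ^ (m + 1) := by ring
      rw [h1, hzf, mul_one]
    · have hadd : ((i + 1 : Fin (m+1)) : ℕ) = (i : ℕ) + 1 := by
        rw [Fin.val_add_one, if_neg hi]
      rw [hadd, pow_succ]
      ring
end

section
/- Let E be a field, R = Fin f → E, φ the cyclic shift automorphism, and α, δ ∈ Eˣ with α^f ≠ δ^f. Let F : R² → R² be the φ-semilinear map with F(e₁) = (α·1)·e₁ and F(e₂) = (δ·1)·e₂ (so F(r·v) = φ(r)·F(v)). Then for θ ∈ R, the submodule R·(e₁ + θ·e₂) is stable under F if and only if θ = 0. In particular the only F-stable R-submodules of R² that are free of rank one containing a vector with first coordinate a unit are R·e₁. -/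
open Fin.NatCast

theorem stmt14 (E : Type*) [Field E] (f : ℕ) [NeZero f] (α δ : E)
    (hα : α ≠ 0) (hδ : δ ≠ 0) (hne : α ^ f ≠ δ ^ f) (θ : Fin f → E) :
    (∀ v ∈ Submodule.span (Fin f → E) {((1 : Fin f → E), θ)},
        ((((fun _ => α) * shift v.1, (fun _ => δ) * shift v.2)) :
            (Fin f → E) × (Fin f → E)) ∈
          Submodule.span (Fin f → E) {((1 : Fin f → E), θ)}) ↔ θ = 0 := by
  constructor
  · intro h
    have h1 := h ((1 : Fin f → E), θ) (Submodule.mem_span_singleton_self _)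
    rw [Submodule.mem_span_singleton] at h1
    obtain ⟨r, hr⟩ := h1
    have hr1 : r * 1 = (fun _ => α) * shift (1 : Fin f → E) := congrArg Prod.fst hr
    have hr2 : r * θ = (fun _ => δ) * shift θ := congrArg Prod.snd hr
    have hrα : r = fun _ => α := by
      funext i
      have := congrFun hr1 i
      simpa [shift] using this
    subst hrα
    have key : ∀ i, α * θ i = δ * θ (i + 1) := by
      intro i
      have := congrFun hr2 i
      simpa [shift] using this
    have iter : ∀ n : ℕ, ∀ i : Fin f, α ^ n * θ i = δ ^ n * θ (i + n) := by
      intro n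
      induction n with
      | zero => intro i; simp
      | succ n ih =>
        intro i
        have h1 := key (i + n)
        have h2 := ih i
        have hc : ((n + 1 : ℕ) : Fin f) = (n : Fin f) + 1 := by push_cast; ring
        rw [hc, ← add_assoc]
        calc α ^ (n+1) * θ i = α * (δ ^ n * θ (i + n)) := by rw [← h2]; ring
          _ = δ ^ n * (δ * θ (i + ↑n + 1)) := by rw [← h1]; ring
          _ = δ ^ (n+1) * θ (i + ↑n + 1) := by ring
    funext i
    have := iter f i
    have hf : i + (f : Fin f) = i := by
      simp
    rw [hf] at this
    by_contra hθ
    exact hne (mul_right_cancel₀ hθ this)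
  · intro hθ v hv
    subst hθ
    rw [Submodule.mem_span_singleton] at hv ⊢
    obtain ⟨r, hr⟩ := hv
    refine ⟨(fun _ => α) * shift r, ?_⟩
    have h1 : v.1 = r := by
      have := congrArg Prod.fst hr
      simpa using this.symm
    have h2 : v.2 = 0 := by
      have := congrArg Prod.snd hr
      simpa using this.symm
    rw [h1, h2]
    ext i <;> simp [shift, Pi.smul_apply, smul_eq_mul]
end

section
/- Let E be a field, R = Fin f → E, φ the cyclic shift automorphism, and let F : R² → R² be a φ-semilinear bijection whose matrix in the standard basis is lower triangular: F(e₁) = a·e₁ + c·e₂, F(e₂) = d·e₂ with a, d ∈ R having all coordinates nonzero. Then every F-stable R-submodule M of R² satisfying M ∩ R·e₂ ≠ 0 is either R·e₂ or all of R². -/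
/-- The fiber (coordinate) of a submodule of `R²` at index `i`. -/
def fiber {E : Type*} [Field E] {f : ℕ}
    (M : Submodule (Fin f → E) ((Fin f → E) × (Fin f → E))) (i : Fin f) :
    Submodule E (E × E) where
  carrier := {p | ∃ v ∈ M, v.1 i = p.1 ∧ v.2 i = p.2}
  zero_mem' := ⟨0, M.zero_mem, rfl, rfl⟩
  add_mem' := by
    rintro p q ⟨v, hv, hv1, hv2⟩ ⟨w, hw, hw1, hw2⟩
    exact ⟨v + w, M.add_mem hv hw, by simp [hv1, hw1], by simp [hv2, hw2]⟩
  smul_mem' := by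
    rintro t p ⟨v, hv, hv1, hv2⟩
    exact ⟨(fun _ => t) • v, M.smul_mem _ hv, by simp [hv1], by simp [hv2]⟩

lemma mem_fiber {E : Type*} [Field E] {f : ℕ}
    {M : Submodule (Fin f → E) ((Fin f → E) × (Fin f → E))} {i : Fin f} {p : E × E} :
    p ∈ fiber M i ↔ ∃ v ∈ M, v.1 i = p.1 ∧ v.2 i = p.2 := Iff.rfl

lemma mem_of_fiber {E : Type*} [Field E] {f : ℕ} [NeZero f]
    {M : Submodule (Fin f → E) ((Fin f → E) × (Fin f → E))}
    (v : (Fin f → E) × (Fin f → E))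
    (h : ∀ i, (v.1 i, v.2 i) ∈ fiber M i) : v ∈ M := by
  classical
  choose w hw hw1 hw2 using fun i => mem_fiber.mp (h i)
  have hv : v = ∑ i : Fin f, (Pi.single i (1 : E) : Fin f → E) • w i := by
    have aux : ∀ (g : Fin f → (Fin f → E)) (j : Fin f),
        (∑ i : Fin f, (Pi.single i (1 : E) : Fin f → E) • g i) j = g j j := by
      intro g j
      rw [Finset.sum_apply]
      rw [Finset.sum_eq_single j]
      · simp
      · intro b _ hbj
        simp [Pi.single_eq_of_ne (Ne.symm hbj)]
      · simp
    refine Prod.ext ?_ ?_ <;> funext j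
    · have := aux (fun i => (w i).1) j
      rw [Prod.fst_sum] at *
      simpa [hw1 j] using this.symm
    · have := aux (fun i => (w i).2) j
      rw [Prod.snd_sum] at *
      simpa [hw2 j] using this.symm
  rw [hv]
  exact Submodule.sum_mem M fun i _ => M.smul_mem _ (hw i)

theorem stmt15 (E : Type*) [Field E] (f : ℕ) [NeZero f] (a c d : Fin f → E)
    (ha : ∀ i, a i ≠ 0) (hd : ∀ i, d i ≠ 0)
    (F : (Fin f → E) × (Fin f → E) → (Fin f → E) × (Fin f → E))
    (hF : ∀ v, F v = (a * shift v.1, c * shift v.1 + d * shift v.2))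
    (hbij : Function.Bijective F)
    (M : Submodule (Fin f → E) ((Fin f → E) × (Fin f → E)))
    (hstab : ∀ v ∈ M, F v ∈ M)
    (hnz : M ⊓ Submodule.span (Fin f → E) {((0 : Fin f → E), (1 : Fin f → E))} ≠ ⊥) :
    M = Submodule.span (Fin f → E) {((0 : Fin f → E), (1 : Fin f → E))} ∨ M = ⊤ := by
  classical
  -- the semilinear step on fibers
  have hB : ∀ (i : Fin f) (x y : E), (x, y) ∈ fiber M (i + 1) →
      (a i * x, c i * x + d i * y) ∈ fiber M i := by
    rintro i x y ⟨v, hv, h1, h2⟩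
    refine ⟨F v, hstab v hv, ?_, ?_⟩ <;> rw [hF] <;>
      simp [shift, h1, h2]
  -- some fiber contains (0,1)
  obtain ⟨z, hz, hzne⟩ := (Submodule.ne_bot_iff _).mp hnz
  obtain ⟨hzM, hzs⟩ := Submodule.mem_inf.mp hz
  obtain ⟨r, hr⟩ := Submodule.mem_span_singleton.mp hzs
  have hz1 : z.1 = 0 := by rw [← hr]; simp
  have hz2 : z.2 = r := by rw [← hr]; simp
  have hrne : r ≠ 0 := by
    intro h
    apply hzne
    rw [← hr, h, zero_smul]
  obtain ⟨i0, hi0ne⟩ := Function.ne_iff.mp hrne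
  have hi0 : ((0 : E), (1 : E)) ∈ fiber M i0 := by
    have h1 : ((0 : E), r i0) ∈ fiber M i0 :=
      ⟨z, hzM, by rw [hz1]; rfl, by rw [hz2]⟩
    have h2 := (fiber M i0).smul_mem (r i0)⁻¹ h1
    simpa [smul_eq_mul, inv_mul_cancel₀ hi0ne] using h2
  -- propagation of (0,1)
  have hline_step : ∀ j : Fin f, ((0 : E), (1 : E)) ∈ fiber M (j + 1) →
      ((0 : E), (1 : E)) ∈ fiber M j := by
    intro j hj
    have h1 := hB j 0 1 hj
    simp only [mul_zero, zero_add, mul_one] at h1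
    have h2 := (fiber M j).smul_mem (d j)⁻¹ h1
    simpa [smul_eq_mul, inv_mul_cancel₀ (hd j)] using h2
  open Fin.NatCast Fin.CommRing in
  have hline : ∀ j, ((0 : E), (1 : E)) ∈ fiber M j := by
    have key : ∀ k : ℕ, ((0 : E), (1 : E)) ∈ fiber M (i0 - (k : Fin f)) := by
      intro k
      induction k with
      | zero => simpa using hi0
      | succ n ih =>
        have heq : i0 - (((n + 1 : ℕ)) : Fin f) + 1 = i0 - ((n : ℕ) : Fin f) := by
          push_cast
          ring
        exact hline_step _ (by rw [heq]; exact ih)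
    intro j
    have heq : i0 - (((i0 - j).val : ℕ) : Fin f) = j := by
      rw [Fin.cast_val_eq_self]
      ring
    simpa [heq] using key (i0 - j).val
  by_cases hM : M ≤ Submodule.span (Fin f → E) {((0 : Fin f → E), (1 : Fin f → E))}
  · left
    refine le_antisymm hM ?_
    rw [Submodule.span_le, Set.singleton_subset_iff]
    exact mem_of_fiber _ fun i => hline i
  · right
    obtain ⟨v, hvM, hvs⟩ := SetLike.not_le_iff_exists.mp hM
    have hv1 : v.1 ≠ 0 := by
      intro h
      apply hvs
      apply Submodule.mem_span_singleton.mpr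
      refine ⟨v.2, ?_⟩
      refine Prod.ext ?_ ?_
      · simp [h]
      · simp
    obtain ⟨i1, hne⟩ := Function.ne_iff.mp hv1
    simp only [Pi.zero_apply] at hne
    have htop1 : fiber M i1 = ⊤ := by
      rw [eq_top_iff]
      rintro ⟨x, y⟩ -
      have h1 : (v.1 i1, v.2 i1) ∈ fiber M i1 := ⟨v, hvM, rfl, rfl⟩
      have h2 := hline i1
      have h3 := (fiber M i1).add_mem
        ((fiber M i1).smul_mem (x / v.1 i1) h1)
        ((fiber M i1).smul_mem (y - x / v.1 i1 * v.2 i1) h2)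
      have heq : (x / v.1 i1) • (v.1 i1, v.2 i1)
          + (y - x / v.1 i1 * v.2 i1) • ((0 : E), (1 : E)) = (x, y) := by
        rw [Prod.smul_mk, Prod.smul_mk, Prod.mk_add_mk, Prod.mk.injEq]
        constructor
        · simp [div_mul_cancel₀ _ hne]
        · simp [smul_eq_mul]
      rwa [heq] at h3
    have htop_step : ∀ j : Fin f, fiber M (j + 1) = ⊤ → fiber M j = ⊤ := by
      intro j hj
      rw [eq_top_iff]
      rintro ⟨x, y⟩ -
      have hmem : (x / a j, (y - c j * (x / a j)) / d j) ∈ fiber M (j + 1) := by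
        rw [hj]; trivial
      have h3 := hB j _ _ hmem
      have heq : (a j * (x / a j), c j * (x / a j) + d j * ((y - c j * (x / a j)) / d j))
          = (x, y) := by
        rw [Prod.mk.injEq]
        constructor
        · field_simp [ha j]
        · field_simp [ha j, hd j]
          ring
      rwa [heq] at h3
    open Fin.NatCast Fin.CommRing in
    have htopall : ∀ j, fiber M j = ⊤ := by
      have key : ∀ k : ℕ, fiber M (i1 - (k : Fin f)) = ⊤ := by
        intro k
        induction k with
        | zero => simpa using htop1
        | succ n ih =>
          have heq : i1 - (((n + 1 : ℕ)) : Fin f) + 1 = i1 - ((n : ℕ) : Fin f) := by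
            push_cast
            ring
          exact htop_step _ (by rw [heq]; exact ih)
      intro j
      have heq : i1 - (((i1 - j).val : ℕ) : Fin f) = j := by
        rw [Fin.cast_val_eq_self]
        ring
      simpa [heq] using key (i1 - j).val
    rw [eq_top_iff]
    rintro w -
    exact mem_of_fiber w fun i => by rw [htopall i]; trivial
end

section
/- Let E be a field, R = Fin f → E, φ the cyclic shift automorphism, and for i = 1, 2 let F_i : R² → R² be the φ-semilinear map with matrix diag(α_i·1, δ_i·1), where α_i, δ_i ∈ Eˣ and α_i^f ≠ δ_i^f. If h : R² → R² is an R-linear bijection with h ∘ F₁ = F₂ ∘ h, then {α₁^f, δ₁^f} = {α₂^f, δ₂^f} as sets. Moreover, if α₁^f = α₂^f and δ₁^f = δ₂^f (and these are distinct from the other pairing), then the matrix of h is diagonal. -/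
open Fin.NatCast in
private lemma key_rec {f : ℕ} [NeZero f] {E : Type*} [Field E] {β γ : E}
    {g : Fin f → E}
    (hrec : ∀ i, β * g i = γ * g (i + 1)) (hg : g ≠ 0) : β ^ f = γ ^ f := by
  obtain ⟨i, hi⟩ := Function.ne_iff.mp hg
  have hi : g i ≠ 0 := by simpa using hi
  have main : ∀ n : ℕ, γ ^ n * g (i + n) = β ^ n * g i := by
    intro n
    induction n with
    | zero => simp
    | succ n ih =>
      have h1 : (i + (↑(n + 1) : Fin f)) = (i + (n : Fin f)) + 1 := by
        push_cast; exact (add_assoc _ _ _).symm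
      calc γ ^ (n + 1) * g (i + (↑(n + 1) : Fin f))
          = γ ^ n * (γ * g ((i + (n : Fin f)) + 1)) := by rw [h1, pow_succ]; ring
        _ = γ ^ n * (β * g (i + (n : Fin f))) := by rw [← hrec]
        _ = β * (γ ^ n * g (i + (n : Fin f))) := by ring
        _ = β * (β ^ n * g i) := by rw [ih]
        _ = β ^ (n + 1) * g i := by rw [pow_succ]; ring
  have hf := main f
  rw [Fin.natCast_self, add_zero] at hf
  exact (mul_right_cancel₀ hi hf).symm

theorem stmt16 (E : Type*) [Field E] (f : ℕ) [NeZero f] (α₁ δ₁ α₂ δ₂ : E)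
    (h1 : α₁ ≠ 0) (h2 : δ₁ ≠ 0) (h3 : α₂ ≠ 0) (h4 : δ₂ ≠ 0)
    (hne1 : α₁ ^ f ≠ δ₁ ^ f) (hne2 : α₂ ^ f ≠ δ₂ ^ f)
    (h : ((Fin f → E) × (Fin f → E)) →ₗ[Fin f → E] ((Fin f → E) × (Fin f → E)))
    (hbij : Function.Bijective h)
    (hcomm : ∀ v : (Fin f → E) × (Fin f → E),
      h ((fun _ => α₁) * shift v.1, (fun _ => δ₁) * shift v.2) =
        ((fun _ => α₂) * shift (h v).1, (fun _ => δ₂) * shift (h v).2)) :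
    ({α₁ ^ f, δ₁ ^ f} : Set E) = {α₂ ^ f, δ₂ ^ f} ∧
    (α₁ ^ f = α₂ ^ f → δ₁ ^ f = δ₂ ^ f → α₁ ^ f ≠ δ₂ ^ f →
      (h (1, 0)).2 = 0 ∧ (h (0, 1)).1 = 0) := by
  set R := Fin f → E with hR
  set a : R := (h (1, 0)).1 with ha
  set b : R := (h (1, 0)).2 with hb
  set c : R := (h (0, 1)).1 with hc
  set d : R := (h (0, 1)).2 with hd
  have hs1 : shift (1 : R) = 1 := rfl
  have hs0 : shift (0 : R) = 0 := rfl
  -- relations from equivariance at (1,0)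
  have H1 := hcomm (1, 0)
  rw [hs1, hs0, mul_one, mul_zero] at H1
  have hsm1 : ((fun _ => α₁ : R), (0 : R)) = (fun _ => α₁ : R) • ((1 : R), (0 : R)) := by
    ext i <;> simp <;> rfl
  rw [hsm1, map_smul] at H1
  have rel_a : ∀ i, α₁ * a i = α₂ * a (i + 1) := fun i => congrFun (congrArg Prod.fst H1) i
  have rel_b : ∀ i, α₁ * b i = δ₂ * b (i + 1) := fun i => congrFun (congrArg Prod.snd H1) i
  -- relations from equivariance at (0,1)
  have H2 := hcomm (0, 1)
  rw [hs1, hs0, mul_one, mul_zero] at H2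
  have hsm2 : ((0 : R), (fun _ => δ₁ : R)) = (fun _ => δ₁ : R) • ((0 : R), (1 : R)) := by
    ext i <;> simp <;> rfl
  rw [hsm2, map_smul] at H2
  have rel_c : ∀ i, δ₁ * c i = α₂ * c (i + 1) := fun i => congrFun (congrArg Prod.fst H2) i
  have rel_d : ∀ i, δ₁ * d i = δ₂ * d (i + 1) := fun i => congrFun (congrArg Prod.snd H2) i
  have hA : a ≠ 0 → α₁ ^ f = α₂ ^ f := fun hz => key_rec rel_a hz
  have hB : b ≠ 0 → α₁ ^ f = δ₂ ^ f := fun hz => key_rec rel_b hz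
  have hC : c ≠ 0 → δ₁ ^ f = α₂ ^ f := fun hz => key_rec rel_c hz
  have hD : d ≠ 0 → δ₁ ^ f = δ₂ ^ f := fun hz => key_rec rel_d hz
  -- nonvanishing from injectivity
  have hne10 : ((1, 0) : R × R) ≠ 0 := by
    simp [Prod.ext_iff]
  have hne01 : ((0, 1) : R × R) ≠ 0 := by
    simp [Prod.ext_iff]
  have hab : a ≠ 0 ∨ b ≠ 0 := by
    by_contra hcon
    push_neg at hcon
    apply hne10
    apply hbij.1
    rw [map_zero]
    exact Prod.ext hcon.1 hcon.2
  have hcd : c ≠ 0 ∨ d ≠ 0 := by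
    by_contra hcon
    push_neg at hcon
    apply hne01
    apply hbij.1
    rw [map_zero]
    exact Prod.ext hcon.1 hcon.2
  constructor
  · rcases hab with ha' | hb' <;> rcases hcd with hc' | hd'
    · exact absurd ((hA ha').trans (hC hc').symm) hne1
    · rw [hA ha', hD hd']
    · rw [hB hb', hC hc', Set.pair_comm]
    · exact absurd ((hB hb').trans (hD hd').symm) hne1
  · intro e1 e2 e3
    constructor
    · by_contra hb'
      exact e3 (hB hb')
    · by_contra hc'
      exact hne1 (e1.trans (hC hc').symm)
end

section
/- Let E be a field, R = Fin f → E, φ the cyclic shift automorphism (applied entrywise to matrices), and P ∈ GL₂(R) such that the twisted norm Nm_φ(P) = P·φ(P)⋯φ^{f-1}(P) equals α·I for some α ∈ Eˣ (constant scalar matrix). Then there exists Q ∈ GL₂(R) such that Q·P·φ(Q)^{-1} = diag((α,1,...,1), (α,1,...,1)), i.e. the diagonal matrix over R both of whose diagonal entries are the vector with first coordinate α and all other coordinates 1. -/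
open Fin.NatCast

lemma shift_iterate {f : ℕ} [NeZero f] {E : Type*} (k : ℕ) (x : Fin f → E) (i : Fin f) :
    shift^[k] x i = x (i + k) := by
  induction k generalizing x i with
  | zero => simp
  | succ n ih =>
    rw [Function.iterate_succ, Function.comp_apply, ih]
    simp only [shift]
    congr 1
    push_cast [Nat.cast_add]
    abel

theorem stmt17 (E : Type*) [Field E] [IsAlgClosed E] (f : ℕ) [NeZero f]
    (P : Matrix (Fin 2) (Fin 2) (Fin f → E)) (hP : IsUnit P)
    (α : E) (hα : α ≠ 0)
    (hNm : ((List.range f).map (fun k => P.map (shift^[k]))).prod =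
      ((fun _ => α) : Fin f → E) • (1 : Matrix (Fin 2) (Fin 2) (Fin f → E))) :
    ∃ Q : Matrix (Fin 2) (Fin 2) (Fin f → E), IsUnit Q ∧
      Q * P =
        Matrix.diagonal
            ![(fun i : Fin f => if i = 0 then α else 1),
              (fun i : Fin f => if i = 0 then α else 1)] *
          (Q.map shift) := by
  classical
  obtain ⟨m, rfl⟩ : ∃ m, f = m + 1 := ⟨f - 1, by have := Nat.pos_of_ne_zero (NeZero.ne f); omega⟩
  set π : ∀ i : Fin (m + 1), (Fin (m + 1) → E) →+* E :=
    fun i => Pi.evalRingHom (fun _ => E) i with hπ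
  set Pc : Fin (m + 1) → Matrix (Fin 2) (Fin 2) E := fun i => P.map (fun v => v i) with hPcdef
  have hmap : ∀ i : Fin (m + 1), (π i).mapMatrix P = Pc i := fun i => rfl
  have hPcu : ∀ i, IsUnit (Pc i) := fun i => hmap i ▸ hP.map ((π i).mapMatrix)
  -- componentwise norm condition
  have hnorm : ∀ i : Fin (m + 1),
      ((List.range (m + 1)).map (fun k : ℕ => Pc (i + (k : Fin (m + 1))))).prod
      = α • (1 : Matrix (Fin 2) (Fin 2) E) := by
    intro i
    have h := congrArg ((π i).mapMatrix) hNm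
    rw [map_list_prod, List.map_map] at h
    have h1 : ((π i).mapMatrix ∘ fun k => P.map (shift^[k]))
        = fun k : ℕ => Pc (i + (k : Fin (m + 1))) := by
      funext k
      ext a b
      show shift^[k] (P a b) i = P a b (i + k)
      exact shift_iterate k (P a b) i
    have h2 : (π i).mapMatrix (((fun _ => α) : Fin (m + 1) → E) •
          (1 : Matrix (Fin 2) (Fin 2) (Fin (m + 1) → E)))
        = α • (1 : Matrix (Fin 2) (Fin 2) E) := by
      ext a b
      simp only [RingHom.mapMatrix_apply, Matrix.map_apply, Matrix.smul_apply,
        Matrix.one_apply]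
      split_ifs <;> simp [hπ]
    rw [h1, h2] at h
    exact h
  -- partial products
  set Pr : ℕ → Matrix (Fin 2) (Fin 2) E :=
    fun n => ((List.range n).map (fun j : ℕ => Pc (j : Fin (m + 1)))).prod with hPrdef
  have hPr0 : Pr 0 = 1 := rfl
  have hPrsucc : ∀ n : ℕ, Pr (n + 1) = Pr n * Pc (n : Fin (m + 1)) := by
    intro n
    simp [hPrdef, List.range_succ]
  have hPrf : Pr (m + 1) = α • 1 := by
    have h := hnorm 0
    simpa [hPrdef] using h
  have hPru : ∀ n, IsUnit (Pr n) := by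
    intro n
    induction n with
    | zero => exact isUnit_one
    | succ k ih => rw [hPrsucc]; exact ih.mul (hPcu _)
  set Qc : Fin (m + 1) → Matrix (Fin 2) (Fin 2) E :=
    fun i => if i = 0 then 1 else α⁻¹ • Pr i.val with hQcdef
  have hai : α * α⁻¹ = 1 := mul_inv_cancel₀ hα
  have hia : α⁻¹ * α = 1 := inv_mul_cancel₀ hα
  have hlast : (Fin.last m) + 1 = 0 := by
    rw [Fin.ext_iff, Fin.val_add_one]
    simp
  have key : ∀ i : Fin (m + 1), Qc i * Pc i
      = (if i = (0 : Fin (m + 1)) then α else 1) • Qc (i + 1) := by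
    intro i
    by_cases hl : i = Fin.last m
    · subst hl
      have hv : (Fin.last m).val + 1 = m + 1 := by simp
      by_cases h0 : (Fin.last m : Fin (m + 1)) = 0
      · -- m = 0
        have hm : m = 0 := by
          have := Fin.ext_iff.mp h0
          simpa using this
        subst hm
        have hPc0 : Pc (Fin.last 0) = α • 1 := by
          have h2 := hPrf
          rw [hPrsucc] at h2
          simp only [hPr0, one_mul, Nat.cast_zero] at h2
          rwa [h0]
        rw [hlast, if_pos h0]
        simp only [hQcdef, if_pos h0, if_pos rfl, one_mul, hPc0, smul_smul]
      · rw [hlast]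
        simp only [hQcdef, if_neg h0, if_pos rfl, smul_mul_assoc]
        rw [show Pc (Fin.last m) = Pc ((((Fin.last m).val : ℕ) : Fin (m + 1)))
            by rw [Fin.cast_val_eq_self],
          ← hPrsucc, hv, hPrf, smul_smul, hia, one_smul]
    · have hv : ((i + 1 : Fin (m + 1)) : ℕ) = i.val + 1 :=
        Fin.val_add_one_of_lt (Fin.lt_last_iff_ne_last.mpr hl)
      have h1 : i + 1 ≠ 0 := by
        intro hc
        have := Fin.ext_iff.mp hc
        rw [hv] at this
        simp at this
      by_cases h0 : i = 0
      · subst h0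
        have hQi1 : Qc (0 + 1) = α⁻¹ • Pc 0 := by
          simp only [hQcdef, if_neg h1, hv]
          simp [hPrsucc, hPr0]
        rw [hQi1, if_pos rfl]
        simp only [hQcdef, if_pos rfl, one_mul, smul_smul, hai, one_smul]
      · simp only [hQcdef, if_neg h0, if_neg h1, smul_mul_assoc, one_smul, hv]
        rw [show Pc i = Pc ((i.val : Fin (m + 1))) by rw [Fin.cast_val_eq_self], ← hPrsucc]
  -- assemble Q
  set Q : Matrix (Fin 2) (Fin 2) (Fin (m + 1) → E) :=
    Matrix.of (fun a b => fun i => Qc i a b) with hQdef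
  have hQcomp : ∀ i : Fin (m + 1), (π i).mapMatrix Q = Qc i := fun i => rfl
  have hQcu : ∀ i : Fin (m + 1), IsUnit (Qc i) := by
    intro i
    by_cases h0 : i = 0
    · simp [hQcdef, h0]
    · simp only [hQcdef, if_neg h0]
      rw [Matrix.isUnit_iff_isUnit_det, Matrix.det_smul]
      exact (isUnit_iff_ne_zero.2 (pow_ne_zero _ (inv_ne_zero hα))).mul
        ((Matrix.isUnit_iff_isUnit_det _).mp (hPru i.val))
  refine ⟨Q, ?_, ?_⟩
  · rw [Matrix.isUnit_iff_isUnit_det]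
    refine IsUnit.of_mul_eq_one (fun i => ((Qc i).det)⁻¹) ?_
    funext i
    have hdet : Q.det i = (Qc i).det := by
      rw [show Q.det i = (π i) Q.det from rfl, RingHom.map_det, hQcomp]
    have hne : (Qc i).det ≠ 0 := ((Matrix.isUnit_iff_isUnit_det _).mp (hQcu i)).ne_zero
    show Q.det i * ((Qc i).det)⁻¹ = 1
    rw [hdet, mul_inv_cancel₀ hne]
  · ext a b i
    have hL : (Q * P) a b i = (Qc i * Pc i) a b := by
      rw [Matrix.mul_apply, Matrix.mul_apply, Finset.sum_apply]
      rfl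
    rw [hL, key]
    rw [Matrix.diagonal_mul]
    have hv2 : (![(fun i : Fin (m + 1) => if i = 0 then α else 1),
        (fun i : Fin (m + 1) => if i = 0 then α else 1)] : Fin 2 → Fin (m + 1) → E) a
        = fun i : Fin (m + 1) => if i = 0 then α else 1 := by
      fin_cases a <;> rfl
    rw [hv2]
    show ((if i = (0 : Fin (m + 1)) then α else 1) • Qc (i + 1)) a b
      = (if i = (0 : Fin (m + 1)) then α else 1) * (Q.map shift) a b i
    rw [Matrix.smul_apply, smul_eq_mul]
    rfl
end
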